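/- Let b > 0, τ > 0, c > 0, and let φ be a monotone traveling front of the neutral KPP-Fisher equation with speed c. Then the function s ↦ φ(s)·(1 − φ(s − c·τ)) is nonnegative and integrable on ℝ, its integral satisfies ∫_ℝ φ(s)·(1 − φ(s−c·τ)) ds = c·(1−b) > 0, and consequently b ∈ (0,1). -/

import Mathlib

open Filter MeasureTheory

/-- A monotone traveling front of the neutral KPP-Fisher equation with speed `c`. -/
def IsMonotoneFront (b c τ : ℝ) (φ : ℝ → ℝ) : Prop :=
  Monotone φ ∧
  ContDiff ℝ 2 (fun t => φ t - b * φ (t - c * τ)) ∧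
  (∀ t : ℝ,
    deriv (deriv (fun r => φ r - b * φ (r - c * τ))) t
      - c * deriv (fun r => φ r - b * φ (r - c * τ)) t
      + φ t * (1 - φ (t - c * τ)) = 0) ∧
  Tendsto φ atBot (nhds 0) ∧ Tendsto φ atTop (nhds 1)

/-- Linear growth from a lower bound on the derivative. -/
lemma growth_lemma {f : ℝ → ℝ} (hf : Differentiable ℝ f) {a b m : ℝ} (hab : a ≤ b)
    (h : ∀ r, a ≤ r → r ≤ b → m ≤ deriv f r) : f a + m * (b - a) ≤ f b := by
  have H : MonotoneOn (fun t => f t - m * t) (Set.Icc a b) := by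
    apply monotoneOn_of_deriv_nonneg (convex_Icc a b)
    · exact (hf.continuous.sub (continuous_const.mul continuous_id)).continuousOn
    · exact (hf.sub ((differentiable_id).const_mul m)).differentiableOn
    · intro x hx
      rw [interior_Icc] at hx
      have hd : deriv (fun t => f t - m * t) x = deriv f x - m := by
        rw [deriv_fun_sub (hf x) ((differentiableAt_fun_id).const_mul m),
          deriv_const_mul m differentiableAt_fun_id, deriv_id'']
        ring
      rw [hd]
      have := h x hx.1.le hx.2.le
      linarith
  have h2 := H (Set.left_mem_Icc.mpr hab) (Set.right_mem_Icc.mpr hab) hab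
  simp only at h2
  nlinarith [h2]

/-- If `f` has a finite limit at `+∞` then its derivative cannot have a negative limit. -/
lemma no_neg_limit {f : ℝ → ℝ} (hf : Differentiable ℝ f) {A l : ℝ}
    (hA : Tendsto f atTop (nhds A)) (hl : Tendsto (deriv f) atTop (nhds l))
    (hneg : l < 0) : False := by
  obtain ⟨T, hT⟩ := eventually_atTop.mp
    (Filter.Tendsto.eventually_le_const (show l < l / 2 by linarith) hl)
  obtain ⟨T', hT'⟩ := eventually_atTop.mp
    (Filter.Tendsto.eventually_const_le (show A - 1 < A by linarith) hA)
  set S := max T T' with hS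
  have hfS : A - 1 ≤ f S := hT' S (le_max_right _ _)
  -- choose t far enough
  set t := S + 2 * (f S - A + 2) / (-l) with ht_def
  have hpos2 : (0:ℝ) < f S - A + 2 := by linarith
  have hSt : S ≤ t := by
    have h0 : 0 ≤ 2 * (f S - A + 2) / (-l) := div_nonneg (by linarith) (by linarith)
    rw [ht_def]
    linarith
  -- upper bound on f t via growth of -f with slope -l/2
  have hgrow := growth_lemma (f := fun s => -f s) hf.neg hSt (m := -(l/2))
    (fun r hr1 hr2 => by
      rw [deriv.fun_neg]
      have := hT r (le_trans (le_max_left _ _) hr1)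
      linarith)
  -- hgrow : -f S + (-(l/2)) * (t - S) ≤ -f t
  have hts : t - S = 2 * (f S - A + 2) / (-l) := by rw [ht_def]; ring
  have hlne : l ≠ 0 := ne_of_lt hneg
  have hval : (-(l/2)) * (t - S) = f S - A + 2 := by
    rw [hts]; field_simp
  have hft : f t ≤ A - 2 := by
    nlinarith [hgrow]
  have := hT' t (le_trans (le_max_right _ _) hSt)
  linarith

/-- If `f` has a finite limit at `+∞` and `deriv f` has a limit, that limit is zero. -/
lemma deriv_limit_zero_atTop {f : ℝ → ℝ} (hf : Differentiable ℝ f) {A l : ℝ}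
    (hA : Tendsto f atTop (nhds A)) (hl : Tendsto (deriv f) atTop (nhds l)) : l = 0 := by
  by_contra hne
  rcases lt_or_gt_of_ne hne with hneg | hpos
  · exact no_neg_limit hf hA hl hneg
  · have hderiv : deriv (fun s => -f s) = fun s => -deriv f s := funext (fun s => deriv.fun_neg)
    exact no_neg_limit (f := fun s => -f s) hf.neg hA.neg (by rw [hderiv]; exact hl.neg) (by linarith)

/-- Same at `-∞`. -/
lemma deriv_limit_zero_atBot {f : ℝ → ℝ} (hf : Differentiable ℝ f) {A l : ℝ}
    (hA : Tendsto f atBot (nhds A)) (hl : Tendsto (deriv f) atBot (nhds l)) : l = 0 := by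
  have hg : Differentiable ℝ (fun s : ℝ => f (-s)) := hf.comp differentiable_neg
  have hgA : Tendsto (fun s : ℝ => f (-s)) atTop (nhds A) := hA.comp tendsto_neg_atTop_atBot
  have hgd : deriv (fun s : ℝ => f (-s)) = fun s => -deriv f (-s) :=
    funext (fun s => deriv_comp_neg f s)
  have hgl : Tendsto (deriv fun s : ℝ => f (-s)) atTop (nhds (-l)) := by
    rw [hgd]
    exact (hl.comp tendsto_neg_atTop_atBot).neg
  have := deriv_limit_zero_atTop hg hgA hgl
  linarith

set_option maxHeartbeats 1600000 in
/-- If `b, τ, c > 0` and `φ` is a monotone traveling front of the neutral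
KPP-Fisher equation with speed `c`, then `s ↦ φ(s)(1 − φ(s − cτ))` is nonnegative and
integrable with `∫_ℝ φ(s)(1 − φ(s−cτ)) ds = c(1−b) > 0`, so that `b ∈ (0,1)`. -/
theorem front_integral_identity (b τ c : ℝ) (hb : 0 < b) (hτ : 0 < τ) (hc : 0 < c)
    (φ : ℝ → ℝ) (hφ : IsMonotoneFront b c τ φ) :
    (∀ s : ℝ, 0 ≤ φ s * (1 - φ (s - c * τ))) ∧
    Integrable (fun s => φ s * (1 - φ (s - c * τ))) ∧
    (∫ s : ℝ, φ s * (1 - φ (s - c * τ))) = c * (1 - b) ∧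
    0 < c * (1 - b) ∧ b < 1 := by
  obtain ⟨hmono, hv2, hode, hbot, htop⟩ := hφ
  set v : ℝ → ℝ := fun t => φ t - b * φ (t - c * τ) with hv_def
  have hφ0 : ∀ s, 0 ≤ φ s := hmono.le_of_tendsto hbot
  have hφ1 : ∀ s, φ s ≤ 1 := hmono.ge_of_tendsto htop
  have hG0 : ∀ s : ℝ, 0 ≤ φ s * (1 - φ (s - c * τ)) :=
    fun s => mul_nonneg (hφ0 s) (by linarith [hφ1 (s - c * τ)])
  -- differentiability data
  have hv2' : ContDiff ℝ (1 + 1) v := by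
    rw [show ((1 : WithTop ℕ∞) + 1) = 2 by norm_num]; exact hv2
  have hvdiff : Differentiable ℝ v := (contDiff_succ_iff_deriv.mp hv2').1
  have hv1 : ContDiff ℝ 1 (deriv v) := (contDiff_succ_iff_deriv.mp hv2').2.2
  have hdv_diff : Differentiable ℝ (deriv v) := hv1.differentiable one_ne_zero
  have hd2v_cont : Continuous (deriv (deriv v)) := hv1.continuous_deriv le_rfl
  -- the antiderivative F
  set F : ℝ → ℝ := fun t => c * v t - deriv v t with hF_def
  have hF_diff : Differentiable ℝ F := (hvdiff.const_mul c).sub hdv_diff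
  have hF_deriv : ∀ t, deriv F t = φ t * (1 - φ (t - c * τ)) := by
    intro t
    have h1 : deriv F t = c * deriv v t - deriv (deriv v) t := by
      rw [hF_def, deriv_fun_sub ((hvdiff t).const_mul c) (hdv_diff t),
        deriv_const_mul c (hvdiff t)]
    have h2 := hode t
    rw [h1]
    linarith
  have hF_mono : Monotone F :=
    monotone_of_deriv_nonneg hF_diff (fun t => by rw [hF_deriv]; exact hG0 t)
  have hFd_cont : Continuous (deriv F) := by
    have : deriv F = fun t => c * deriv v t - deriv (deriv v) t := by
      funext t
      rw [hF_def, deriv_fun_sub ((hvdiff t).const_mul c) (hdv_diff t),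
        deriv_const_mul c (hvdiff t)]
    rw [this]
    exact (continuous_const.mul hv1.continuous).sub hd2v_cont
  have hGcont : Continuous (fun s : ℝ => φ s * (1 - φ (s - c * τ))) := by
    have : (fun s : ℝ => φ s * (1 - φ (s - c * τ))) = deriv F :=
      funext fun t => (hF_deriv t).symm
    rw [this]; exact hFd_cont
  -- pointwise bounds on v
  have hv_le : ∀ t, v t ≤ 1 := by
    intro t
    have := mul_nonneg hb.le (hφ0 (t - c * τ))
    have := hφ1 t
    simp only [hv_def]
    linarith
  have hv_ge : ∀ t, -b ≤ v t := by
    intro t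
    have h1 : b * φ (t - c * τ) ≤ b * 1 := by
      have := hφ1 (t - c * τ); nlinarith
    have := hφ0 t
    simp only [hv_def]
    linarith
  -- limits of v
  have hsubtop : Tendsto (fun t : ℝ => t - c * τ) atTop atTop := by
    simpa [sub_eq_add_neg] using tendsto_atTop_add_const_right atTop (-(c * τ)) tendsto_id
  have hsubbot : Tendsto (fun t : ℝ => t - c * τ) atBot atBot := by
    simpa [sub_eq_add_neg] using tendsto_atBot_add_const_right atBot (-(c * τ)) tendsto_id
  have hvtop : Tendsto v atTop (nhds (1 - b)) := by
    have h1 : Tendsto (fun t => φ (t - c * τ)) atTop (nhds 1) := htop.comp hsubtop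
    have := htop.sub (h1.const_mul b)
    simpa using this
  have hvbot : Tendsto v atBot (nhds 0) := by
    have h1 : Tendsto (fun t => φ (t - c * τ)) atBot (nhds 0) := hbot.comp hsubbot
    have := hbot.sub (h1.const_mul b)
    simpa using this
  -- F is bounded above
  have hFbddA : BddAbove (Set.range F) := by
    by_contra hnb
    have hFtop : Tendsto F atTop atTop := by
      apply tendsto_atTop_atTop_of_monotone hF_mono
      intro M
      obtain ⟨y, ⟨a, rfl⟩, hy⟩ := not_bddAbove_iff.mp hnb M
      exact ⟨a, hy.le⟩
    obtain ⟨T, hT⟩ := eventually_atTop.mp (hFtop.eventually_ge_atTop (c * (1 + b) + 1))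
    have hd : ∀ t, T ≤ t → deriv v t ≤ -1 := by
      intro t ht
      have hF := hT t ht
      have hcv : c * v t ≤ c * (1 + b) := by nlinarith [hv_le t, hb.le]
      have : deriv v t = c * v t - F t := by rw [hF_def]; ring
      linarith
    set t₁ := T + (v T + b + 1) with ht₁_def
    have hTt₁ : T ≤ t₁ := by have := hv_ge T; simp only [ht₁_def]; linarith
    have hgrow := growth_lemma (f := fun s => -v s) hvdiff.neg hTt₁ (m := 1)
      (fun r hr1 _ => by rw [deriv.fun_neg]; linarith [hd r hr1])
    have := hv_ge t₁
    have ht₁T : t₁ - T = v T + b + 1 := by rw [ht₁_def]; ring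
    nlinarith [hgrow]
  -- F is bounded below
  have hFbddB : BddBelow (Set.range F) := by
    by_contra hnb
    have hFbot : Tendsto F atBot atBot := by
      apply tendsto_atBot_atBot_of_monotone hF_mono
      intro M
      obtain ⟨y, ⟨a, rfl⟩, hy⟩ := not_bddBelow_iff.mp hnb M
      exact ⟨a, hy.le⟩
    obtain ⟨T, hT⟩ := eventually_atBot.mp (hFbot.eventually_le_atBot (-(c * b) - 1))
    have hd : ∀ t, t ≤ T → 1 ≤ deriv v t := by
      intro t ht
      have hF := hT t ht
      have hcv : -(c * b) ≤ c * v t := by nlinarith [hv_ge t]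
      have : deriv v t = c * v t - F t := by rw [hF_def]; ring
      linarith
    set t₀ := T - (v T + b + 1) with ht₀_def
    have ht₀T : t₀ ≤ T := by have := hv_ge T; simp only [ht₀_def]; linarith
    have hgrow := growth_lemma (f := v) hvdiff ht₀T (m := 1)
      (fun r _ hr2 => hd r hr2)
    have := hv_ge t₀
    have hTt₀ : T - t₀ = v T + b + 1 := by rw [ht₀_def]; ring
    nlinarith [hgrow]
  -- limits of F
  have hFt : Tendsto F atTop (nhds (⨆ t, F t)) := tendsto_atTop_ciSup hF_mono hFbddA
  have hFb : Tendsto F atBot (nhds (⨅ t, F t)) := tendsto_atBot_ciInf hF_mono hFbddB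
  have hdv_eq : deriv v = fun t => c * v t - F t := by
    funext t; rw [hF_def]; ring
  have hdvtop : Tendsto (deriv v) atTop (nhds (c * (1 - b) - ⨆ t, F t)) := by
    rw [hdv_eq]; exact (hvtop.const_mul c).sub hFt
  have hdvbot : Tendsto (deriv v) atBot (nhds (c * 0 - ⨅ t, F t)) := by
    rw [hdv_eq]; exact (hvbot.const_mul c).sub hFb
  have hsup : (⨆ t, F t) = c * (1 - b) := by
    have := deriv_limit_zero_atTop hvdiff hvtop hdvtop
    linarith
  have hinf : (⨅ t, F t) = 0 := by
    have := deriv_limit_zero_atBot hvdiff hvbot hdvbot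
    linarith
  -- interval integrals
  have hint_eq : ∀ T₁ T₂ : ℝ, (∫ s in T₁..T₂, φ s * (1 - φ (s - c * τ))) = F T₂ - F T₁ := by
    intro T₁ T₂
    rw [intervalIntegral.integral_congr (g := deriv F) (fun x _ => (hF_deriv x).symm)]
    exact intervalIntegral.integral_deriv_eq_sub (fun x _ => hF_diff x)
      (hFd_cont.intervalIntegrable _ _)
  have hna : Tendsto (fun n : ℕ => -(n : ℝ)) atTop atBot :=
    tendsto_neg_atTop_atBot.comp tendsto_natCast_atTop_atTop
  have hnb' : Tendsto (fun n : ℕ => (n : ℝ)) atTop atTop := tendsto_natCast_atTop_atTop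
  -- integrability
  have hInt : Integrable (fun s => φ s * (1 - φ (s - c * τ))) := by
    apply integrable_of_intervalIntegral_norm_bounded
      (a := fun n : ℕ => -(n : ℝ)) (b := fun n : ℕ => (n : ℝ))
      ((⨆ t, F t) - ⨅ t, F t) (fun i => hGcont.integrableOn_Ioc) hna hnb'
    filter_upwards with n
    have hnorm : (∫ x in (-(n : ℝ))..(n : ℝ), ‖φ x * (1 - φ (x - c * τ))‖)
        = ∫ x in (-(n : ℝ))..(n : ℝ), φ x * (1 - φ (x - c * τ)) :=
      intervalIntegral.integral_congr (fun x _ => Real.norm_of_nonneg (hG0 x))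
    rw [hnorm, hint_eq]
    have h1 : F (n : ℝ) ≤ ⨆ t, F t := le_ciSup hFbddA _
    have h2 : (⨅ t, F t) ≤ F (-(n : ℝ)) := ciInf_le hFbddB _
    linarith
  -- value of the integral
  have hIntVal : (∫ s : ℝ, φ s * (1 - φ (s - c * τ))) = c * (1 - b) := by
    have hval := intervalIntegral_tendsto_integral hInt hna hnb'
    have hval2 : Tendsto (fun n : ℕ => ∫ s in (-(n : ℝ))..(n : ℝ), φ s * (1 - φ (s - c * τ)))
        atTop (nhds (c * (1 - b) - 0)) := by
      have : Tendsto (fun n : ℕ => F (n : ℝ) - F (-(n : ℝ))) atTop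
          (nhds ((⨆ t, F t) - ⨅ t, F t)) := (hFt.comp hnb').sub (hFb.comp hna)
      rw [hsup, hinf] at this
      exact this.congr (fun n => (hint_eq _ _).symm)
    have := tendsto_nhds_unique hval hval2
    rw [this]; ring
  -- positivity
  have hposint : 0 < c * (1 - b) := by
    have h0le : 0 ≤ ∫ s : ℝ, φ s * (1 - φ (s - c * τ)) := integral_nonneg hG0
    rw [hIntVal] at h0le
    rcases h0le.lt_or_eq with h | h
    · exact h
    · exfalso
      have hzero : (∫ s : ℝ, φ s * (1 - φ (s - c * τ))) = 0 := by rw [hIntVal, ← h]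
      have hae := (integral_eq_zero_iff_of_nonneg hG0 hInt).mp hzero
      have heq : (fun s : ℝ => φ s * (1 - φ (s - c * τ))) = (fun _ => 0) :=
        (Continuous.ae_eq_iff_eq volume hGcont continuous_const).mp hae
      have heq' : ∀ s : ℝ, φ s * (1 - φ (s - c * τ)) = 0 := fun s => congrFun heq s
      obtain ⟨t₁, ht₁⟩ := (Filter.Tendsto.eventually_const_le (show (1:ℝ)/2 < 1 by norm_num) htop).exists
      have hstep : ∀ s : ℝ, 0 < φ s → φ (s - c * τ) = 1 := by
        intro s hs
        rcases mul_eq_zero.mp (heq' s) with h' | h'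
        · exact absurd h' (ne_of_gt hs)
        · linarith
      have hkey : ∀ n : ℕ, 0 < φ (t₁ - n * (c * τ)) := by
        intro n
        induction n with
        | zero => simpa using lt_of_lt_of_le (by norm_num : (0:ℝ) < 1/2) ht₁
        | succ k ih =>
          have h1 := hstep _ ih
          have harg : t₁ - ((k : ℕ) + 1 : ℕ) * (c * τ) = t₁ - (k : ℕ) * (c * τ) - c * τ := by
            push_cast; ring
          rw [harg, h1]; norm_num
      have hone : ∀ n : ℕ, φ (t₁ - ((n : ℝ) + 1) * (c * τ)) = 1 := by
        intro n
        have h1 := hstep _ (hkey n)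
        have harg : t₁ - ((n : ℝ) + 1) * (c * τ) = t₁ - (n : ℕ) * (c * τ) - c * τ := by
          push_cast; ring
        rw [harg, h1]
      have hseq : Tendsto (fun n : ℕ => t₁ - ((n : ℝ) + 1) * (c * τ)) atTop atBot := by
        have h1 : Tendsto (fun n : ℕ => ((n : ℝ) + 1) * (c * τ)) atTop atTop :=
          (tendsto_atTop_add_const_right atTop 1 tendsto_natCast_atTop_atTop).atTop_mul_const
            (by positivity)
        have h2 : Tendsto (fun n : ℕ => -(((n : ℝ) + 1) * (c * τ))) atTop atBot :=
          tendsto_neg_atTop_atBot.comp h1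
        simpa [sub_eq_add_neg] using tendsto_atBot_add_const_left atTop t₁ h2
      have hcomp : Tendsto (fun n : ℕ => φ (t₁ - ((n : ℝ) + 1) * (c * τ))) atTop (nhds 0) :=
        hbot.comp hseq
      have hconst : Tendsto (fun n : ℕ => φ (t₁ - ((n : ℝ) + 1) * (c * τ))) atTop (nhds 1) := by
        have : (fun n : ℕ => φ (t₁ - ((n : ℝ) + 1) * (c * τ))) = fun _ => (1:ℝ) :=
          funext hone
        rw [this]; exact tendsto_const_nhds
      have := tendsto_nhds_unique hcomp hconst
      norm_num at this
  have hblt : b < 1 := by nlinarith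
  exact ⟨hG0, hInt, hIntVal, hposint, hblt⟩
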